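/- arXiv:1507.02536 — 4 statements merged into one kernel-verified Lean document; each statement's English description precedes it below -/
import Mathlib

section
/- In a k-tree on n ≥ k+2 vertices, the set of k-simplicial vertices is an independent set (no two k-simplicial vertices are adjacent). -/
open SimpleGraph

/-- A vertex `v` is *`k`-simplicial* in `G` if it has degree `k` and its
neighborhood induces a clique. -/
def IsKSimplicial {V : Type*} (k : ℕ) (G : SimpleGraph V) (v : V) : Prop :=
  (G.neighborSet v).ncard = k ∧ (G.neighborSet v).Pairwise G.Adj

/-- `S_1(G)`: the set of `k`-simplicial vertices of `G`. -/
def simplicialSet {V : Type*} (k : ℕ) (G : SimpleGraph V) : Set V :=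
  {v | IsKSimplicial k G v}

/-- `G` is a *`k`-tree*: there is a construction ordering of the vertices in which
the first `k` vertices form a clique and every later vertex is joined exactly to a
`k`-clique among the earlier vertices. -/
def IsKTree {V : Type*} [Fintype V] (k : ℕ) (G : SimpleGraph V) : Prop :=
  k ≤ Fintype.card V ∧
  ∃ e : Fin (Fintype.card V) ≃ V,
    (∀ i j : Fin (Fintype.card V), (i : ℕ) < k → (j : ℕ) < k → i ≠ j → G.Adj (e i) (e j)) ∧
    (∀ i : Fin (Fintype.card V), k ≤ (i : ℕ) →
      ∃ s : Finset (Fin (Fintype.card V)),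
        s.card = k ∧ (∀ j ∈ s, j < i) ∧
        (∀ j : Fin (Fintype.card V), j < i → (G.Adj (e i) (e j) ↔ j ∈ s)) ∧
        (∀ j₁ ∈ s, ∀ j₂ ∈ s, j₁ ≠ j₂ → G.Adj (e j₁) (e j₂)))

open Classical in
/-- The signless Laplacian matrix `Q(G) = D(G) + A(G)` of a finite graph, over `ℝ`. -/
noncomputable def signlessLaplacian {V : Type*} [Fintype V] (G : SimpleGraph V) :
    Matrix V V ℝ :=
  Matrix.of fun u v =>
    (if u = v then ((G.neighborSet u).ncard : ℝ) else 0) + (if G.Adj u v then 1 else 0)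

/-- The signless Laplacian index `q₁(G)`: the largest element of the spectrum of `Q(G)`. -/
noncomputable def q1 {V : Type*} [Fintype V] [DecidableEq V] (G : SimpleGraph V) : ℝ :=
  sSup (spectrum ℝ (signlessLaplacian G))

/-- `l(G)`: the maximum, over all `k`-cliques `C` of `G`, of the number of vertices `w`
with `N(w) = C` (such `w` automatically has degree `k`). -/
noncomputable def lG {V : Type*} (k : ℕ) (G : SimpleGraph V) : ℕ :=
  sSup {t | ∃ C : Finset V, G.IsNClique k C ∧
    t = {w : V | G.neighborSet w = (C : Set V)}.ncard}

/-- The `k`-star `S_{k,m}`: a base clique `K_k` together with `m` additional vertices,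
each adjacent to all of the base clique (and to nothing else). -/
def kStar (k m : ℕ) : SimpleGraph (Fin k ⊕ Fin m) where
  Adj x y := x ≠ y ∧ (x.isLeft = true ∨ y.isLeft = true)
  symm := ⟨fun _ _ h => ⟨h.1.symm, h.2.symm⟩⟩
  loopless := ⟨fun _ h => h.1 rfl⟩

/-- Delete the edges in `del` and add the edges in `add`. -/
def adjustGraph {V : Type*} (G : SimpleGraph V) (del add : Set (Sym2 V)) : SimpleGraph V :=
  SimpleGraph.fromEdgeSet ((G.edgeSet \ del) ∪ add)

/-- `G₁ = S_{k,m} - u₁v_k + u₁u₂`, where `v_k = Sum.inl (k-1)`, `uᵢ = Sum.inr (i-1)`. -/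
def graphG1 (k m : ℕ) (hk : 0 < k) (hm : 2 ≤ m) : SimpleGraph (Fin k ⊕ Fin m) :=
  adjustGraph (kStar k m)
    {s(Sum.inr ⟨0, by omega⟩, Sum.inl ⟨k - 1, by omega⟩)}
    {s(Sum.inr ⟨0, by omega⟩, Sum.inr ⟨1, by omega⟩)}

/-- `G₂ = G₁ - u₃v_k + u₃u₂`. -/
def graphG2 (k m : ℕ) (hk : 0 < k) (hm : 3 ≤ m) : SimpleGraph (Fin k ⊕ Fin m) :=
  adjustGraph (graphG1 k m hk (by omega))
    {s(Sum.inr ⟨2, by omega⟩, Sum.inl ⟨k - 1, by omega⟩)}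
    {s(Sum.inr ⟨2, by omega⟩, Sum.inr ⟨1, by omega⟩)}

/-- `G₃ = G₁ - u₃v_k + u₃u₁`. -/
def graphG3 (k m : ℕ) (hk : 0 < k) (hm : 3 ≤ m) : SimpleGraph (Fin k ⊕ Fin m) :=
  adjustGraph (graphG1 k m hk (by omega))
    {s(Sum.inr ⟨2, by omega⟩, Sum.inl ⟨k - 1, by omega⟩)}
    {s(Sum.inr ⟨2, by omega⟩, Sum.inr ⟨0, by omega⟩)}

/-- `G₄ = G₁ - u₃v₁ + u₃u₂`. -/
def graphG4 (k m : ℕ) (hk : 0 < k) (hm : 3 ≤ m) : SimpleGraph (Fin k ⊕ Fin m) :=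
  adjustGraph (graphG1 k m hk (by omega))
    {s(Sum.inr ⟨2, by omega⟩, Sum.inl ⟨0, by omega⟩)}
    {s(Sum.inr ⟨2, by omega⟩, Sum.inr ⟨1, by omega⟩)}

/-- `G₅ = G₁ - u₃v_{k-1} - u₃v_k + u₃u₁ + u₃u₂`. -/
def graphG5 (k m : ℕ) (hk : 2 ≤ k) (hm : 3 ≤ m) : SimpleGraph (Fin k ⊕ Fin m) :=
  adjustGraph (graphG1 k m (by omega) (by omega))
    {s(Sum.inr ⟨2, by omega⟩, Sum.inl ⟨k - 2, by omega⟩),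
     s(Sum.inr ⟨2, by omega⟩, Sum.inl ⟨k - 1, by omega⟩)}
    {s(Sum.inr ⟨2, by omega⟩, Sum.inr ⟨0, by omega⟩),
     s(Sum.inr ⟨2, by omega⟩, Sum.inr ⟨1, by omega⟩)}

open Finset in
private lemma neigh_card {V : Type*} [Fintype V] {k : ℕ} (G : SimpleGraph V)
    {n : ℕ} (e : Fin n ≃ V) (w : Fin n) (S : Finset (Fin n))
    (hS : ∀ m ∈ S, G.Adj (e w) (e m))
    (hd : (G.neighborSet (e w)).ncard = k) : S.card ≤ k := by
  classical
  have h1 : ((S.image e : Finset V) : Set V) ⊆ G.neighborSet (e w) := by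
    intro x hx
    simp only [coe_image, Set.mem_image, mem_coe] at hx
    obtain ⟨m, hm, rfl⟩ := hx
    exact hS m hm
  have h2 := Set.ncard_le_ncard h1 (Set.toFinite _)
  rwa [Set.ncard_coe_finset, Finset.card_image_of_injective _ e.injective, hd] at h2

open Finset in
private lemma aux_ktree {V : Type*} [Fintype V] (k : ℕ) (G : SimpleGraph V) {n : ℕ}
    (e : Fin n ≃ V)
    (hcl : ∀ i j : Fin n, (i : ℕ) < k → (j : ℕ) < k → i ≠ j → G.Adj (e i) (e j))
    (hstep : ∀ i : Fin n, k ≤ (i : ℕ) →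
      ∃ s : Finset (Fin n),
        s.card = k ∧ (∀ j ∈ s, j < i) ∧
        (∀ j : Fin n, j < i → (G.Adj (e i) (e j) ↔ j ∈ s)) ∧
        (∀ j₁ ∈ s, ∀ j₂ ∈ s, j₁ ≠ j₂ → G.Adj (e j₁) (e j₂)))
    (hn : k + 2 ≤ n)
    (i j : Fin n) (hij : i < j)
    (hdu : (G.neighborSet (e i)).ncard = k) (hdv : (G.neighborSet (e j)).ncard = k)
    (hadj : G.Adj (e i) (e j)) : False := by
  by_cases hik : k ≤ (i : ℕ)
  · -- both i, j ≥ k : e j attaches to e i, giving e i degree ≥ k+1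
    obtain ⟨s, hs_card, hs_lt, hs_adj, -⟩ := hstep i hik
    have hjS : j ∉ s := fun h => absurd (hs_lt j h) (not_lt.mpr hij.le)
    have hall : ∀ m ∈ insert j s, G.Adj (e i) (e m) := by
      intro m hm
      rcases Finset.mem_insert.mp hm with rfl | hm
      · exact hadj
      · exact (hs_adj m (hs_lt m hm)).mpr hm
    have hle := neigh_card G e i _ hall hdu
    rw [Finset.card_insert_of_notMem hjS, hs_card] at hle
    omega
  · push_neg at hik
    have hkpos : 1 ≤ k := by omega
    set κ : Fin n := ⟨k, by omega⟩ with hκdef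
    set p : Fin n := ⟨k + 1, by omega⟩ with hpdef
    have hκval : (κ : ℕ) = k := rfl
    have hpval : (p : ℕ) = k + 1 := rfl
    -- the vertex at position k is joined to all of {0, ..., k-1}
    obtain ⟨sk, hsk_card, hsk_lt, hsk_adj, -⟩ := hstep κ (le_of_eq hκval.symm)
    have hsk_eq : sk = Finset.Iio κ := by
      apply Finset.eq_of_subset_of_card_le
      · intro m hm; exact Finset.mem_Iio.mpr (hsk_lt m hm)
      · rw [Fin.card_Iio, hκval, hsk_card]
    have hiκ : i < κ := by rw [Fin.lt_def, hκval]; exact hik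
    have hiκmem : i ∈ sk := by rw [hsk_eq]; exact Finset.mem_Iio.mpr hiκ
    have hadjκi : G.Adj (e i) (e κ) := ((hsk_adj i hiκ).mpr hiκmem).symm
    have memIio_val : ∀ m : Fin n, m ∈ Finset.Iio κ → (m : ℕ) < k := by
      intro m hm
      have := Fin.lt_def.mp (Finset.mem_Iio.mp hm)
      rwa [hκval] at this
    by_cases hjk : k < (j : ℕ)
    · -- i < k < j : e i adjacent to k-1 clique mates, to e κ, and to e j : degree ≥ k+1
      have hjκ : j ≠ κ := by
        intro h
        rw [h, hκval] at hjk
        omega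
      have hjIio : j ∉ (Finset.Iio κ).erase i := by
        intro h
        have := memIio_val j (Finset.mem_of_mem_erase h)
        omega
      have hκer : κ ∉ (Finset.Iio κ).erase i := by
        simp [Finset.mem_erase]
      have hall : ∀ m ∈ insert j (insert κ ((Finset.Iio κ).erase i)), G.Adj (e i) (e m) := by
        intro m hm
        rcases Finset.mem_insert.mp hm with rfl | hm
        · exact hadj
        rcases Finset.mem_insert.mp hm with rfl | hm
        · exact hadjκi
        · obtain ⟨hmi, hmlt⟩ := Finset.mem_erase.mp hm
          exact hcl i m hik (memIio_val m hmlt) (Ne.symm hmi)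
      have hle := neigh_card G e i _ hall hdu
      rw [Finset.card_insert_of_notMem (by
            simp only [Finset.mem_insert, not_or]; exact ⟨hjκ, hjIio⟩),
          Finset.card_insert_of_notMem hκer,
          Finset.card_erase_of_mem (Finset.mem_Iio.mpr hiκ), Fin.card_Iio, hκval] at hle
      omega
    · -- i < k and j ≤ k
      push_neg at hjk
      obtain ⟨sp, hsp_card, hsp_lt, hsp_adj, -⟩ := hstep p (by rw [hpval]; omega)
      have hip : i < p := by rw [Fin.lt_def, hpval]; omega
      have hjp : j < p := by rw [Fin.lt_def, hpval]; omega
      have hκp : κ < p := by rw [Fin.lt_def, hpval, hκval]; omega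
      have hpκ : p ≠ κ := by
        intro h
        rw [← h, hpval] at hκval
        omega
      have hpIio : ∀ a : Fin n, p ∉ (Finset.Iio κ).erase a := by
        intro a h
        have := memIio_val p (Finset.mem_of_mem_erase h)
        rw [hpval] at this
        omega
      -- i ∉ sp, since otherwise e i has degree ≥ k+1
      have hinsp : i ∉ sp := by
        intro hmem
        have hκer : κ ∉ (Finset.Iio κ).erase i := by simp [Finset.mem_erase]
        have hpnot : p ∉ insert κ ((Finset.Iio κ).erase i) := by
          simp only [Finset.mem_insert, not_or]
          exact ⟨hpκ, hpIio i⟩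
        have hall : ∀ m ∈ insert p (insert κ ((Finset.Iio κ).erase i)),
            G.Adj (e i) (e m) := by
          intro m hm
          rcases Finset.mem_insert.mp hm with rfl | hm
          · exact ((hsp_adj i hip).mpr hmem).symm
          rcases Finset.mem_insert.mp hm with rfl | hm
          · exact hadjκi
          · obtain ⟨hmi, hmlt⟩ := Finset.mem_erase.mp hm
            exact hcl i m hik (memIio_val m hmlt) (Ne.symm hmi)
        have hle := neigh_card G e i _ hall hdu
        rw [Finset.card_insert_of_notMem hpnot,
            Finset.card_insert_of_notMem hκer,
            Finset.card_erase_of_mem (Finset.mem_Iio.mpr hiκ), Fin.card_Iio, hκval] at hle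
        omega
      -- j ∉ sp, since otherwise e j has degree ≥ k+1
      have hjnsp : j ∉ sp := by
        intro hmem
        rcases eq_or_lt_of_le hjk with hjeq | hjlt
        · -- j = κ : neighbors of e j include all of sk plus e p
          have hjκ : j = κ := by
            apply Fin.ext
            rw [hκval, hjeq]
          have hpnotsk : p ∉ sk := by
            rw [hsk_eq]
            intro h
            have := memIio_val p h
            rw [hpval] at this
            omega
          have hall : ∀ m ∈ insert p sk, G.Adj (e j) (e m) := by
            intro m hm
            rcases Finset.mem_insert.mp hm with rfl | hm
            · exact ((hsp_adj j hjp).mpr hmem).symm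
            · rw [hjκ]
              exact (hsk_adj m (hsk_lt m hm)).mpr hm
          have hle := neigh_card G e j _ hall hdv
          rw [Finset.card_insert_of_notMem hpnotsk, hsk_card] at hle
          omega
        · -- j < k : neighbors of e j include k-1 clique mates, e κ, e p
          have hjκlt : j < κ := by rw [Fin.lt_def, hκval]; exact hjlt
          have hjκmem : j ∈ sk := by rw [hsk_eq]; exact Finset.mem_Iio.mpr hjκlt
          have hadjκj : G.Adj (e j) (e κ) := ((hsk_adj j hjκlt).mpr hjκmem).symm
          have hκer : κ ∉ (Finset.Iio κ).erase j := by simp [Finset.mem_erase]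
          have hpnot : p ∉ insert κ ((Finset.Iio κ).erase j) := by
            simp only [Finset.mem_insert, not_or]
            exact ⟨hpκ, hpIio j⟩
          have hall : ∀ m ∈ insert p (insert κ ((Finset.Iio κ).erase j)),
              G.Adj (e j) (e m) := by
            intro m hm
            rcases Finset.mem_insert.mp hm with rfl | hm
            · exact ((hsp_adj j hjp).mpr hmem).symm
            rcases Finset.mem_insert.mp hm with rfl | hm
            · exact hadjκj
            · obtain ⟨hmj, hmlt⟩ := Finset.mem_erase.mp hm
              exact hcl j m hjlt (memIio_val m hmlt) (Ne.symm hmj)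
          have hle := neigh_card G e j _ hall hdv
          rw [Finset.card_insert_of_notMem hpnot,
              Finset.card_insert_of_notMem hκer,
              Finset.card_erase_of_mem (Finset.mem_Iio.mpr hjκlt),
              Fin.card_Iio, hκval] at hle
          omega
      -- now sp ⊆ Iio p \ {i, j}, which has only k-1 elements, contradiction
      have hsub : sp ⊆ ((Finset.Iio p).erase i).erase j := by
        intro m hm
        refine Finset.mem_erase.mpr ⟨?_, Finset.mem_erase.mpr ⟨?_, ?_⟩⟩
        · rintro rfl; exact hjnsp hm
        · rintro rfl; exact hinsp hm
        · exact Finset.mem_Iio.mpr (hsp_lt m hm)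
      have hcard := Finset.card_le_card hsub
      rw [hsp_card,
          Finset.card_erase_of_mem
            (Finset.mem_erase.mpr ⟨hij.ne', Finset.mem_Iio.mpr hjp⟩),
          Finset.card_erase_of_mem (Finset.mem_Iio.mpr hip), Fin.card_Iio, hpval] at hcard
      omega

/-- In a `k`-tree on `n ≥ k+2` vertices, the set of `k`-simplicial vertices is
independent: no two `k`-simplicial vertices are adjacent. -/
theorem kTree_simplicial_independent {V : Type*} [Fintype V] (k : ℕ) (G : SimpleGraph V)
    (h : IsKTree k G) (hn : k + 2 ≤ Fintype.card V) :
    ∀ u v : V, IsKSimplicial k G u → IsKSimplicial k G v → ¬ G.Adj u v := by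
  obtain ⟨-, e, hcl, hstep⟩ := h
  intro u v hu hv hadj
  have hu' : (G.neighborSet (e (e.symm u))).ncard = k := by
    rw [Equiv.apply_symm_apply]; exact hu.1
  have hv' : (G.neighborSet (e (e.symm v))).ncard = k := by
    rw [Equiv.apply_symm_apply]; exact hv.1
  have hadj' : G.Adj (e (e.symm u)) (e (e.symm v)) := by
    simpa using hadj
  rcases lt_trichotomy (e.symm u) (e.symm v) with hlt | heq | hlt
  · exact aux_ktree k G e hcl hstep hn _ _ hlt hu' hv' hadj'
  · exact hadj.ne (by simpa using congrArg e heq)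
  · exact aux_ktree k G e hcl hstep hn _ _ hlt hv' hu' hadj'.symm
end

section
/- There is no n-vertex k-tree G with l(G) = n − k − 1, where l(G) is the maximum, over all k-cliques C of G, of the number of vertices w of degree k with N(w) = C. -/
open SimpleGraph

/-- There is no `n`-vertex `k`-tree `G` with `l(G) = n - k - 1`. -/
theorem kTree_lG_ne {V : Type*} [Fintype V] (k : ℕ) (G : SimpleGraph V)
    (h : IsKTree k G) :
    Fintype.card V ≠ lG k G + k + 1 := by
  classical
  intro hn
  obtain ⟨hkn, e, hclique, hstep⟩ := h
  have hn1 : k < Fintype.card V := by omega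
  -- Every vertex has degree at least k.
  have hdeg : ∀ v : V, k ≤ (G.neighborSet v).ncard := by
    intro v
    obtain ⟨i, rfl⟩ := e.surjective v
    have key : ∃ A : Finset (Fin (Fintype.card V)), A.card = k ∧
        ∀ j ∈ A, G.Adj (e i) (e j) := by
      by_cases hik : k ≤ (i : ℕ)
      · obtain ⟨s, hs1, hs2, hs3, _⟩ := hstep i hik
        exact ⟨s, hs1, fun j hj => (hs3 j (hs2 j hj)).2 hj⟩
      · push_neg at hik
        set i0 : Fin (Fintype.card V) := ⟨k, hn1⟩ with hi0
        obtain ⟨s, hs1, hs2, hs3, _⟩ := hstep i0 (le_refl k)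
        have hsub : s ⊆ Finset.Iio i0 := fun j hj => Finset.mem_Iio.2 (hs2 j hj)
        have hIio : (Finset.Iio i0).card = k := by
          rw [Fin.card_Iio]
        have hseq : s = Finset.Iio i0 :=
          Finset.eq_of_subset_of_card_le hsub (by rw [hs1, hIio])
        have hii0 : i < i0 := by
          simp only [Fin.lt_def, hi0]; exact hik
        have hadj0 : G.Adj (e i0) (e i) :=
          (hs3 i hii0).2 (hseq ▸ Finset.mem_Iio.2 hii0)
        have hmemIio : i ∈ Finset.Iio i0 := Finset.mem_Iio.2 hii0
        have hnotmem : i0 ∉ (Finset.Iio i0).erase i := by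
          intro hmem
          exact absurd (Finset.mem_Iio.1 (Finset.mem_of_mem_erase hmem)) (lt_irrefl i0)
        refine ⟨insert i0 ((Finset.Iio i0).erase i), ?_, ?_⟩
        · rw [Finset.card_insert_of_notMem hnotmem,
            Finset.card_erase_of_mem hmemIio, hIio]
          omega
        · intro j hj
          rcases Finset.mem_insert.1 hj with rfl | hj
          · exact hadj0.symm
          · have hji : j ≠ i := Finset.ne_of_mem_erase hj
            have hjIio : j ∈ Finset.Iio i0 := Finset.mem_of_mem_erase hj
            have hjk : (j : ℕ) < k := by
              have := Finset.mem_Iio.1 hjIio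
              simpa [Fin.lt_def, hi0] using this
            exact hclique i j hik hjk (Ne.symm hji)
    obtain ⟨A, hA1, hA2⟩ := key
    have hsub : ((A.image e : Finset V) : Set V) ⊆ G.neighborSet (e i) := by
      intro x hx
      simp only [Finset.coe_image, Set.mem_image, Finset.mem_coe] at hx
      obtain ⟨j, hj, rfl⟩ := hx
      exact hA2 j hj
    calc k = (A.image e).card := by
            rw [Finset.card_image_of_injective _ e.injective, hA1]
      _ = ((A.image e : Finset V) : Set V).ncard := (Set.ncard_coe_finset _).symm
      _ ≤ (G.neighborSet (e i)).ncard := Set.ncard_le_ncard hsub (Set.toFinite _)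
  -- The supremum defining lG is attained.
  set S := {t | ∃ C : Finset V, G.IsNClique k C ∧
    t = {w : V | G.neighborSet w = (C : Set V)}.ncard} with hSdef
  have hSne : S.Nonempty := by
    refine ⟨_, Finset.univ.image (fun i : Fin k => e (Fin.castLE hkn i)), ?_, rfl⟩
    constructor
    · intro x hx y hy hxy
      simp only [Finset.coe_image, Set.mem_image, Finset.mem_coe] at hx hy
      obtain ⟨i, -, rfl⟩ := hx
      obtain ⟨j, -, rfl⟩ := hy
      have hij : Fin.castLE hkn i ≠ Fin.castLE hkn j := fun hij => hxy (by rw [hij])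
      exact hclique _ _ i.isLt j.isLt hij
    · rw [Finset.card_image_of_injective _
        (fun a b hab => Fin.castLE_injective hkn (e.injective hab)),
        Finset.card_univ, Fintype.card_fin]
  have hbdd : BddAbove S := by
    refine ⟨Fintype.card V, fun t ht => ?_⟩
    obtain ⟨C, -, rfl⟩ := ht
    calc {w : V | G.neighborSet w = (C : Set V)}.ncard
        ≤ (Set.univ : Set V).ncard :=
          Set.ncard_le_ncard (Set.subset_univ _) (Set.toFinite _)
      _ = Fintype.card V := by rw [Set.ncard_univ, Nat.card_eq_fintype_card]
  have hmem : sSup S ∈ S := Nat.sSup_mem hSne hbdd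
  have hlg : lG k G = sSup S := rfl
  obtain ⟨C, hC, hWcard⟩ := hmem
  set W := {w : V | G.neighborSet w = (C : Set V)} with hWdef
  rw [hlg, hWcard] at hn
  have hdisj : Disjoint (C : Set V) W := by
    rw [Set.disjoint_left]
    intro w hwC hwW
    have hwW' : G.neighborSet w = (C : Set V) := hwW
    have : w ∈ G.neighborSet w := by rw [hwW']; exact hwC
    exact G.loopless.irrefl w this
  have hCW : ((C : Set V) ∪ W).ncard = k + W.ncard := by
    rw [Set.ncard_union_eq hdisj (Set.toFinite _) (Set.toFinite _),
      Set.ncard_coe_finset, hC.2]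
  have hcompl : (((C : Set V) ∪ W)ᶜ).ncard = 1 := by
    have h1 := Set.ncard_add_ncard_compl ((C : Set V) ∪ W)
    have h2 : Nat.card V = Fintype.card V := Nat.card_eq_fintype_card
    rw [hCW] at h1
    omega
  obtain ⟨z, hz⟩ := Set.ncard_eq_one.1 hcompl
  have hzmem : z ∈ ((C : Set V) ∪ W)ᶜ := by rw [hz]; exact rfl
  have hzC : z ∉ (C : Set V) := fun hc => hzmem (Or.inl hc)
  have hzW : z ∉ W := fun hw => hzmem (Or.inr hw)
  have hNz : G.neighborSet z ⊆ (C : Set V) := by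
    intro u hu
    by_contra huC
    have hadj : G.Adj z u := hu
    have huW : u ∉ W := by
      intro huW
      have huW' : G.neighborSet u = (C : Set V) := huW
      have : z ∈ (C : Set V) := by rw [← huW']; exact hadj.symm
      exact hzC this
    have humem : u ∈ ((C : Set V) ∪ W)ᶜ := fun hmem => hmem.elim huC huW
    rw [hz] at humem
    have : u = z := humem
    subst this
    exact G.loopless.irrefl u hadj
  have hne : G.neighborSet z ≠ (C : Set V) := hzW
  have hlt : (G.neighborSet z).ncard < k := by
    have := Set.ncard_lt_ncard (HasSubset.Subset.ssubset_of_ne hNz hne)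
      (Set.toFinite _)
    rwa [Set.ncard_coe_finset, hC.2] at this
  exact absurd (hdeg z) (not_le.2 hlt)
end

section
/- For an n-vertex k-tree G, l(G) = n − k if and only if G is isomorphic to the k-star S_{k,n−k}. -/
open SimpleGraph

section Aux

variable {V : Type*} [Fintype V] {k : ℕ} {G : SimpleGraph V}

lemma aux_ncard_compl (C : Finset V) (hcard : C.card = k) :
    ((C : Set V)ᶜ).ncard = Fintype.card V - k := by
  have h := Set.ncard_add_ncard_compl (C : Set V)
  rw [Set.ncard_coe_finset, hcard, Nat.card_eq_fintype_card] at h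
  omega

lemma aux_bound {t : ℕ}
    (ht : t ∈ {t | ∃ C : Finset V, G.IsNClique k C ∧
      t = {w : V | G.neighborSet w = (C : Set V)}.ncard}) :
    t ≤ Fintype.card V - k := by
  obtain ⟨C, hC, rfl⟩ := ht
  have hsub : {w : V | G.neighborSet w = (C : Set V)} ⊆ ((C : Set V))ᶜ := by
    intro w hw hwC
    exact G.irrefl (show w ∈ G.neighborSet w from hw ▸ hwC)
  calc {w : V | G.neighborSet w = (C : Set V)}.ncard
      ≤ ((C : Set V)ᶜ).ncard := Set.ncard_le_ncard hsub (Set.toFinite _)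
    _ = Fintype.card V - k := aux_ncard_compl C hC.2

open Classical in
/-- If `G` is exactly a clique `C` joined to an independent set, it is the `k`-star. -/
noncomputable def auxIso (C : Finset V) (hcard : C.card = k)
    (hadj : ∀ u v : V, G.Adj u v ↔ u ≠ v ∧ (u ∈ C ∨ v ∈ C)) :
    G ≃g kStar k (Fintype.card V - k) := by
  have h1 : Fintype.card {x // x ∈ C} = k := by
    rw [Fintype.card_coe, hcard]
  have h2 : Fintype.card {x // x ∉ C} = Fintype.card V - k := by
    rw [Fintype.card_subtype_compl, h1]
  let e : V ≃ Fin k ⊕ Fin (Fintype.card V - k) :=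
    ((Equiv.sumCompl (· ∈ C)).symm).trans
      (Equiv.sumCongr (Fintype.equivFinOfCardEq h1) (Fintype.equivFinOfCardEq h2))
  have hleft : ∀ u : V, (e u).isLeft = true ↔ u ∈ C := by
    intro u
    by_cases hu : u ∈ C
    · simp [e, Equiv.sumCompl_symm_apply_of_pos hu, hu]
    · simp [e, Equiv.sumCompl_symm_apply_of_neg hu, hu]
  refine ⟨e, ?_⟩
  intro u v
  show (e u ≠ e v ∧ _) ↔ _
  rw [hadj u v, ne_eq, Equiv.apply_eq_iff_eq, hleft u, hleft v, ne_eq]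

set_option linter.unusedSectionVars false in
open Classical in
lemma aux_W_eq (C : Finset V)
    (hadj : ∀ u v : V, G.Adj u v ↔ u ≠ v ∧ (u ∈ C ∨ v ∈ C)) :
    {w : V | G.neighborSet w = (C : Set V)} = ((C : Set V))ᶜ := by
  ext w
  simp only [Set.mem_setOf_eq, Set.mem_compl_iff, Finset.mem_coe]
  constructor
  · intro hw hwC
    exact G.irrefl (show w ∈ G.neighborSet w from hw ▸ hwC)
  · intro hw
    ext v
    simp only [SimpleGraph.mem_neighborSet, hadj, Finset.mem_coe]
    constructor
    · rintro ⟨hne, hv | hv⟩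
      · exact absurd hv hw
      · exact hv
    · intro hv
      exact ⟨fun h => hw (h ▸ hv), Or.inr hv⟩

lemma aux_lG_of_adj (C : Finset V) (hcard : C.card = k)
    (hadj : ∀ u v : V, G.Adj u v ↔ u ≠ v ∧ (u ∈ C ∨ v ∈ C)) :
    lG k G = Fintype.card V - k := by
  have hclique : G.IsNClique k C := by
    constructor
    · intro u hu v hv huv
      exact (hadj u v).2 ⟨huv, Or.inl hu⟩
    · exact hcard
  have hmem : Fintype.card V - k ∈ {t | ∃ C : Finset V, G.IsNClique k C ∧
      t = {w : V | G.neighborSet w = (C : Set V)}.ncard} := by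
    refine ⟨C, hclique, ?_⟩
    rw [aux_W_eq C hadj, aux_ncard_compl C hcard]
  refine le_antisymm (csSup_le' fun t ht => aux_bound ht) ?_
  exact le_csSup ⟨Fintype.card V - k, fun t ht => aux_bound ht⟩ hmem

end Aux

/-- For an `n`-vertex `k`-tree `G`, `l(G) = n - k` iff `G` is isomorphic to the
`k`-star `S_{k,n-k}`. -/
theorem kTree_lG_eq_iff_kStar {V : Type*} [Fintype V] (k : ℕ) (G : SimpleGraph V)
    (h : IsKTree k G) :
    lG k G = Fintype.card V - k ↔ Nonempty (G ≃g kStar k (Fintype.card V - k)) := by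
  classical
  constructor
  · intro hl
    rcases Nat.eq_zero_or_pos (Fintype.card V - k) with h0 | hpos
    · -- degenerate case: `n = k`, `G` is complete
      obtain ⟨hk, e, hbase, _⟩ := h
      have hn : Fintype.card V = k := by omega
      have hadj : ∀ u v : V, G.Adj u v ↔ u ≠ v ∧ (u ∈ (Finset.univ : Finset V) ∨
          v ∈ (Finset.univ : Finset V)) := by
        intro u v
        constructor
        · intro huv; exact ⟨huv.ne, Or.inl (Finset.mem_univ u)⟩
        · rintro ⟨hne, -⟩
          have := hbase (e.symm u) (e.symm v)
            (by have := (e.symm u).isLt; omega) (by have := (e.symm v).isLt; omega)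
            (by simp [hne])
          simpa using this
      exact ⟨auxIso Finset.univ (by simp [hn]) hadj⟩
    · -- main case: the sSup is attained
      set S := {t | ∃ C : Finset V, G.IsNClique k C ∧
        t = {w : V | G.neighborSet w = (C : Set V)}.ncard} with hS
      have hne : S.Nonempty := by
        by_contra hcon
        rw [Set.not_nonempty_iff_eq_empty] at hcon
        rw [lG, ← hS, hcon, csSup_empty] at hl
        simp at hl
        omega
      have hbdd : BddAbove S := ⟨Fintype.card V - k, fun t ht => aux_bound ht⟩
      have hmem : sSup S ∈ S := Nat.sSup_mem hne hbdd
      rw [show sSup S = lG k G from rfl, hl] at hmem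
      obtain ⟨C, hC, hWcard⟩ := hmem
      set W := {w : V | G.neighborSet w = (C : Set V)} with hWdef
      have hsub : W ⊆ ((C : Set V))ᶜ := by
        intro w hw hwC
        exact G.irrefl (show w ∈ G.neighborSet w from hw ▸ hwC)
      have hWeq : W = ((C : Set V))ᶜ := by
        apply Set.eq_of_subset_of_ncard_le hsub _ (Set.toFinite _)
        rw [← hWcard, aux_ncard_compl C hC.2]
      have hadj : ∀ u v : V, G.Adj u v ↔ u ≠ v ∧ (u ∈ C ∨ v ∈ C) := by
        intro u v
        constructor
        · intro huv
          refine ⟨huv.ne, ?_⟩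
          by_contra hcon
          push_neg at hcon
          have hu : u ∈ W := hWeq ▸ (by simpa using hcon.1)
          have : v ∈ G.neighborSet u := huv
          rw [hWdef] at hu
          rw [Set.mem_setOf_eq] at hu
          rw [hu] at this
          exact hcon.2 this
        · rintro ⟨hne, hu | hu⟩
          · by_cases hv : v ∈ C
            · exact hC.1 hu hv hne
            · have hvW : v ∈ W := hWeq ▸ (by simpa using hv)
              rw [hWdef, Set.mem_setOf_eq] at hvW
              have : u ∈ G.neighborSet v := by rw [hvW]; simpa using hu
              exact this.symm
          · by_cases hv : u ∈ C
            · exact hC.1 hv hu hne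
            · have hvW : u ∈ W := hWeq ▸ (by simpa using hv)
              rw [hWdef, Set.mem_setOf_eq] at hvW
              have : v ∈ G.neighborSet u := by rw [hvW]; simpa using hu
              exact this
      exact ⟨auxIso C hC.2 hadj⟩
  · rintro ⟨f⟩
    set C : Finset V := Finset.univ.image (fun i : Fin k => f.symm (Sum.inl i)) with hCdef
    have hmemC : ∀ u : V, u ∈ C ↔ (f u).isLeft = true := by
      intro u
      rw [hCdef]
      simp only [Finset.mem_image, Finset.mem_univ, true_and]
      constructor
      · rintro ⟨i, rfl⟩
        simp
      · intro hu
        rcases hfu : f u with x | x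
        · exact ⟨x, by rw [← hfu]; simp⟩
        · rw [hfu] at hu; simp at hu
    have hcard : C.card = k := by
      rw [hCdef, Finset.card_image_of_injective _
        (fun a b hab => Sum.inl_injective (f.symm.injective.eq_iff.mp hab)), Finset.card_univ,
        Fintype.card_fin]
    have hadj : ∀ u v : V, G.Adj u v ↔ u ≠ v ∧ (u ∈ C ∨ v ∈ C) := by
      intro u v
      rw [← f.map_rel_iff]
      show (f u ≠ f v ∧ _) ↔ _
      rw [ne_eq, EmbeddingLike.apply_eq_iff_eq, hmemC u, hmemC v, ne_eq]
    exact aux_lG_of_adj C hcard hadj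
end

section
/- Let G be a connected graph with signless Laplacian Q(G) = D(G) + A(G), and let x be the (positive) Perron eigenvector for the largest eigenvalue q_1(G). Let u ≠ v be vertices and w_1,...,w_s (s ≥ 1) neighbors of v that are not neighbors of u and all different from u. Let G* be obtained from G by deleting edges vw_i and adding edges uw_i for all i. If x_v ≤ x_u, then q_1(G) < q_1(G*). -/
open SimpleGraph

open SimpleGraph Matrix Finset Pointwise

section SpectralHelpers

variable {n : Type*} [Fintype n] [DecidableEq n]

lemma sl_isHermitian {V : Type*} [Fintype V] (G : SimpleGraph V) :
    (signlessLaplacian G).IsHermitian := by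
  apply Matrix.IsHermitian.ext
  intro i j
  simp only [signlessLaplacian, Matrix.of_apply, star_trivial]
  by_cases h : i = j
  · subst h; simp
  · simp only [h, Ne.symm h, if_false, zero_add]
    rw [G.adj_comm]

lemma posSemidef_smul_one_sub {A : Matrix n n ℝ} (hA : A.IsHermitian) :
    Matrix.PosSemidef (sSup (spectrum ℝ A) • (1 : Matrix n n ℝ) - A) := by
  set μ := sSup (spectrum ℝ A) with hμ
  have hB : (μ • (1 : Matrix n n ℝ) - A).IsHermitian := by
    unfold Matrix.IsHermitian
    rw [Matrix.conjTranspose_sub, Matrix.conjTranspose_smul, Matrix.conjTranspose_one,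
      hA.eq, star_trivial]
  refine hB.posSemidef_iff_eigenvalues_nonneg.mpr fun i => (?_ : (0:ℝ) ≤ hB.eigenvalues i)
  have hmem : hB.eigenvalues i ∈ spectrum ℝ (μ • (1 : Matrix n n ℝ) - A) :=
    hB.eigenvalues_mem_spectrum_real i
  have halg : μ • (1 : Matrix n n ℝ) = algebraMap ℝ (Matrix n n ℝ) μ := by
    rw [Algebra.algebraMap_eq_smul_one]
  have hset : spectrum ℝ (μ • (1 : Matrix n n ℝ) - A) = ({μ} : Set ℝ) - spectrum ℝ A := by
    rw [halg]; exact (spectrum.singleton_sub_eq A μ).symm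
  have hmem2 := (Set.ext_iff.mp hset _).mp hmem
  obtain ⟨a, ha, b, hb, hab⟩ := Set.mem_sub.mp hmem2
  rw [Set.mem_singleton_iff] at ha
  have hble : b ≤ μ := le_csSup A.finite_spectrum.bddAbove hb
  subst ha
  linarith [hab]

lemma rayleigh_le_sSup {A : Matrix n n ℝ} (hA : A.IsHermitian) (y : n → ℝ) :
    y ⬝ᵥ A *ᵥ y ≤ sSup (spectrum ℝ A) * (y ⬝ᵥ y) := by
  have h := (posSemidef_smul_one_sub hA).dotProduct_mulVec_nonneg y
  simp only [Matrix.sub_mulVec, Matrix.smul_mulVec, Matrix.one_mulVec,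
    dotProduct_sub, dotProduct_smul, smul_eq_mul, star_trivial] at h
  linarith

lemma mulVec_eq_of_rayleigh_eq {A : Matrix n n ℝ} (hA : A.IsHermitian) (y : n → ℝ)
    (h : y ⬝ᵥ A *ᵥ y = sSup (spectrum ℝ A) * (y ⬝ᵥ y)) :
    A *ᵥ y = sSup (spectrum ℝ A) • y := by
  have h0 : star y ⬝ᵥ (sSup (spectrum ℝ A) • (1 : Matrix n n ℝ) - A) *ᵥ y = 0 := by
    simp only [Matrix.sub_mulVec, Matrix.smul_mulVec, Matrix.one_mulVec,
      dotProduct_sub, dotProduct_smul, smul_eq_mul, star_trivial]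
    linarith
  have h1 := ((posSemidef_smul_one_sub hA).dotProduct_mulVec_zero_iff y).mp h0
  rw [Matrix.sub_mulVec, sub_eq_zero, Matrix.smul_mulVec, Matrix.one_mulVec] at h1
  exact h1.symm

open Classical in
lemma sl_mulVec {V : Type*} [Fintype V] (G : SimpleGraph V) (y : V → ℝ) (i : V) :
    (signlessLaplacian G *ᵥ y) i
      = ((G.neighborSet i).ncard : ℝ) * y i + ∑ j, if G.Adj i j then y j else 0 := by
  classical
  simp only [Matrix.mulVec, dotProduct, signlessLaplacian, Matrix.of_apply, add_mul,
    ite_mul, one_mul, zero_mul]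
  rw [Finset.sum_add_distrib, Finset.sum_ite_eq]
  simp

end SpectralHelpers

/-- Lemma 1.1 (Hong–Zhang): moving the edges from `v` to its private neighbors
`w ∈ W` over to `u` strictly increases the signless Laplacian index, provided the
Perron vector satisfies `x v ≤ x u`. -/
theorem rotation_increases_q1 {V : Type*} [Fintype V] [DecidableEq V]
    (G : SimpleGraph V) (hconn : G.Connected)
    (x : V → ℝ) (hx_pos : ∀ v, 0 < x v)
    (hx_eig : (signlessLaplacian G).mulVec x = q1 G • x)
    (u v : V) (huv : u ≠ v) (W : Finset V) (hW : W.Nonempty)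
    (hWv : ∀ w ∈ W, G.Adj v w) (hWu : ∀ w ∈ W, ¬ G.Adj u w) (hWne : ∀ w ∈ W, w ≠ u)
    (hxvu : x v ≤ x u) :
    q1 G < q1 (adjustGraph G ((W : Set V).image fun w => s(v, w))
      ((W : Set V).image fun w => s(u, w))) := by
  classical
  set Q := signlessLaplacian G with hQdef
  set G' : SimpleGraph V := adjustGraph G ((W : Set V).image fun w => s(v, w))
      ((W : Set V).image fun w => s(u, w)) with hG'def
  have hvW : v ∉ W := fun h => G.irrefl (hWv v h)
  have huW : u ∉ W := fun h => hWne u h rfl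
  have hWv' : ∀ w ∈ W, w ≠ v := fun w hw => (hWv w hw).ne'
  have hadj : ∀ a b : V, G'.Adj a b ↔
      ((G.Adj a b ∧ ¬(a = v ∧ b ∈ W) ∧ ¬(b = v ∧ a ∈ W)) ∨
        ((a = u ∧ b ∈ W) ∨ (b = u ∧ a ∈ W))) := by
    intro a b
    rw [hG'def]
    simp only [adjustGraph, SimpleGraph.fromEdgeSet_adj, Set.mem_union, Set.mem_diff,
      Set.mem_image, Finset.mem_coe, SimpleGraph.mem_edgeSet, Sym2.eq_iff]
    constructor
    · rintro ⟨(⟨hab, hdel⟩ | ⟨w, hw, (⟨h1, h2⟩ | ⟨h1, h2⟩)⟩), hne⟩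
      · exact Or.inl ⟨hab, fun ⟨hav, hbW⟩ => hdel ⟨b, hbW, Or.inl ⟨hav.symm, rfl⟩⟩,
          fun ⟨hbv, haW⟩ => hdel ⟨a, haW, Or.inr ⟨hbv.symm, rfl⟩⟩⟩
      · exact Or.inr (Or.inl ⟨h1.symm, h2 ▸ hw⟩)
      · exact Or.inr (Or.inr ⟨h1.symm, h2 ▸ hw⟩)
    · rintro (⟨hab, h1, h2⟩ | ⟨rfl, hbW⟩ | ⟨rfl, haW⟩)
      · refine ⟨Or.inl ⟨hab, ?_⟩, hab.ne⟩
        rintro ⟨w, hw, (⟨hva, rfl⟩ | ⟨hvb, rfl⟩)⟩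
        · exact h1 ⟨hva.symm, hw⟩
        · exact h2 ⟨hvb.symm, hw⟩
      · exact ⟨Or.inr ⟨b, hbW, Or.inl ⟨rfl, rfl⟩⟩, (hWne b hbW).symm⟩
      · exact ⟨Or.inr ⟨a, haW, Or.inr ⟨rfl, rfl⟩⟩, hWne a haW⟩
  have hadj_u : ∀ b, G'.Adj u b ↔ (G.Adj u b ∨ b ∈ W) := by
    intro b
    rw [hadj]
    constructor
    · rintro (⟨h, -, -⟩ | ⟨-, h⟩ | ⟨-, h⟩)
      exacts [Or.inl h, Or.inr h, absurd h huW]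
    · rintro (h | h)
      · exact Or.inl ⟨h, fun hc => huv hc.1, fun hc => huW hc.2⟩
      · exact Or.inr (Or.inl ⟨rfl, h⟩)
  have hadj_v : ∀ b, G'.Adj v b ↔ (G.Adj v b ∧ b ∉ W) := by
    intro b
    rw [hadj]
    constructor
    · rintro (⟨h, h1, -⟩ | ⟨h, -⟩ | ⟨-, h⟩)
      · exact ⟨h, fun hb => h1 ⟨rfl, hb⟩⟩
      · exact absurd h.symm huv
      · exact absurd h hvW
    · rintro ⟨h, hb⟩
      exact Or.inl ⟨h, fun hc => hb hc.2, fun hc => hvW hc.2⟩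
  have hadj_w : ∀ w ∈ W, ∀ b, G'.Adj w b ↔ ((G.Adj w b ∧ b ≠ v) ∨ b = u) := by
    intro w hw b
    rw [hadj]
    constructor
    · rintro (⟨h, -, h2⟩ | ⟨h, -⟩ | ⟨h, -⟩)
      · exact Or.inl ⟨h, fun hb => h2 ⟨hb, hw⟩⟩
      · exact absurd h (hWne w hw)
      · exact Or.inr h
    · rintro (⟨h, hb⟩ | rfl)
      · exact Or.inl ⟨h, fun hc => hWv' w hw hc.1, fun hc => hb hc.1⟩
      · exact Or.inr (Or.inr ⟨rfl, hw⟩)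
  have hadj_o : ∀ a, a ≠ u → a ≠ v → a ∉ W → ∀ b, G'.Adj a b ↔ G.Adj a b := by
    intro a hau hav haW b
    rw [hadj]
    constructor
    · rintro (⟨h, -, -⟩ | ⟨h, -⟩ | ⟨-, h⟩)
      · exact h
      · exact absurd h hau
      · exact absurd h haW
    · intro h
      exact Or.inl ⟨h, fun hc => hav hc.1, fun hc => haW hc.2⟩
  -- neighbor sets and degrees
  have hNu : G'.neighborSet u = G.neighborSet u ∪ ↑W := by
    ext b; simp only [SimpleGraph.mem_neighborSet, hadj_u, Set.mem_union, Finset.mem_coe]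
  have hNv : G'.neighborSet v = G.neighborSet v \ ↑W := by
    ext b; simp only [SimpleGraph.mem_neighborSet, hadj_v, Set.mem_diff, Finset.mem_coe]
  have hNw : ∀ w ∈ W, G'.neighborSet w = insert u (G.neighborSet w \ {v}) := by
    intro w hw; ext b
    simp only [SimpleGraph.mem_neighborSet, hadj_w w hw, Set.mem_insert_iff, Set.mem_diff,
      Set.mem_singleton_iff]
    tauto
  have hNo : ∀ a, a ≠ u → a ≠ v → a ∉ W → G'.neighborSet a = G.neighborSet a := by
    intro a h1 h2 h3; ext b; simp only [SimpleGraph.mem_neighborSet, hadj_o a h1 h2 h3]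
  have hdu : ((G'.neighborSet u).ncard : ℝ) = (G.neighborSet u).ncard + W.card := by
    have hd : Disjoint (G.neighborSet u) (↑W : Set V) := by
      rw [Set.disjoint_left]; intro b hb hbW; exact hWu b hbW hb
    rw [hNu, Set.ncard_union_eq hd, Set.ncard_coe_finset]
    push_cast; ring
  have hdv : ((G'.neighborSet v).ncard : ℝ) = (G.neighborSet v).ncard - W.card := by
    have hsub : (↑W : Set V) ⊆ G.neighborSet v := fun b hb => hWv b hb
    have hle : (↑W : Set V).ncard ≤ (G.neighborSet v).ncard :=
      Set.ncard_le_ncard hsub (Set.toFinite _)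
    rw [hNv, Set.ncard_diff hsub, Nat.cast_sub hle, Set.ncard_coe_finset]
  have hdw : ∀ w ∈ W, (G'.neighborSet w).ncard = (G.neighborSet w).ncard := by
    intro w hw
    have hvmem : v ∈ G.neighborSet w := (hWv w hw).symm
    have humem : u ∉ G.neighborSet w \ {v} := fun hc => hWu w hw hc.1.symm
    have hpos : 0 < (G.neighborSet w).ncard := (Set.ncard_pos (Set.toFinite _)).mpr ⟨v, hvmem⟩
    rw [hNw w hw, Set.ncard_insert_of_notMem humem, Set.ncard_diff_singleton_of_mem hvmem]
    omega
  -- sums over neighbors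
  have hT : 0 < ∑ w ∈ W, x w := Finset.sum_pos (fun i _ => hx_pos i) hW
  set T := ∑ w ∈ W, x w with hTdef
  have hsum_mem : ∀ (y : V → ℝ), (∑ j, if j ∈ W then y j else 0) = ∑ j ∈ W, y j := by
    intro y; rw [Finset.sum_ite_mem, Finset.univ_inter]
  have hSu : (∑ j, if G'.Adj u j then x j else 0)
      = (∑ j, if G.Adj u j then x j else 0) + T := by
    have hterm : ∀ j, (if G'.Adj u j then x j else 0)
        = (if G.Adj u j then x j else 0) + (if j ∈ W then x j else 0) := by
      intro j
      by_cases hj : j ∈ W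
      · simp [hadj_u, hj, hWu j hj]
      · simp [hadj_u, hj]
    rw [Finset.sum_congr rfl fun j _ => hterm j, Finset.sum_add_distrib, hsum_mem]
  have hSv : (∑ j, if G'.Adj v j then x j else 0)
      = (∑ j, if G.Adj v j then x j else 0) - T := by
    have hterm : ∀ j, (if G'.Adj v j then x j else 0)
        = (if G.Adj v j then x j else 0) - (if j ∈ W then x j else 0) := by
      intro j
      by_cases hj : j ∈ W
      · simp [hadj_v, hj, hWv j hj]
      · simp [hadj_v, hj]
    rw [Finset.sum_congr rfl fun j _ => hterm j, Finset.sum_sub_distrib, hsum_mem]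
  have hSw : ∀ w ∈ W, (∑ j, if G'.Adj w j then x j else 0)
      = (∑ j, if G.Adj w j then x j else 0) + x u - x v := by
    intro w hw
    have hterm : ∀ j, (if G'.Adj w j then x j else 0)
        = (if G.Adj w j then x j else 0) + (if j = u then x j else 0)
          - (if j = v then x j else 0) := by
      intro j
      by_cases hju : j = u
      · rw [hju]
        simp [hadj_w w hw, huv, show ¬ G.Adj w u from fun h => hWu w hw h.symm]
      · by_cases hjv : j = v
        · rw [hjv]
          simp [hadj_w w hw, (hWv w hw).symm, Ne.symm huv]
        · simp [hadj_w w hw, hju, hjv]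
    rw [Finset.sum_congr rfl fun j _ => hterm j, Finset.sum_sub_distrib,
      Finset.sum_add_distrib, Finset.sum_ite_eq', Finset.sum_ite_eq']
    simp
  -- rows of the signless Laplacians
  set Q' := signlessLaplacian G' with hQ'def
  have hrow_u : (Q' *ᵥ x) u = (Q *ᵥ x) u + ((W.card : ℝ) * x u + T) := by
    rw [hQ'def, hQdef, sl_mulVec, sl_mulVec, hdu, hSu]; ring
  have hrow_v : (Q' *ᵥ x) v = (Q *ᵥ x) v - ((W.card : ℝ) * x v + T) := by
    rw [hQ'def, hQdef, sl_mulVec, sl_mulVec, hdv, hSv]; ring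
  have hrow_w : ∀ w ∈ W, (Q' *ᵥ x) w = (Q *ᵥ x) w + (x u - x v) := by
    intro w hw
    rw [hQ'def, hQdef, sl_mulVec, sl_mulVec, hdw w hw, hSw w hw]; ring
  have hrow_o : ∀ a, a ≠ u → a ≠ v → a ∉ W → (Q' *ᵥ x) a = (Q *ᵥ x) a := by
    intro a h1 h2 h3
    rw [hQ'def, hQdef, sl_mulVec, sl_mulVec, hNo a h1 h2 h3]
    congr 1
    exact Finset.sum_congr rfl fun j _ => by rw [hadj_o a h1 h2 h3 j]
  -- quadratic form comparison
  have hquad : x ⬝ᵥ Q' *ᵥ x = x ⬝ᵥ Q *ᵥ x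
      + ((W.card : ℝ) * (x u ^ 2 - x v ^ 2) + 2 * T * (x u - x v)) := by
    have hsplit : ∀ i, x i * (Q' *ᵥ x) i = x i * (Q *ᵥ x) i
        + (x i * (if i = u then (W.card : ℝ) * x u + T else 0)
          - x i * (if i = v then (W.card : ℝ) * x v + T else 0)
          + x i * (if i ∈ W then x u - x v else 0)) := by
      intro i
      by_cases h1 : i = u
      · subst h1; rw [hrow_u, if_pos rfl, if_neg huv, if_neg huW]; ring
      · by_cases h2 : i = v
        · subst h2; rw [hrow_v, if_neg (Ne.symm huv), if_pos rfl, if_neg hvW]; ring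
        · by_cases h3 : i ∈ W
          · rw [hrow_w i h3, if_neg h1, if_neg h2, if_pos h3]; ring
          · rw [hrow_o i h1 h2 h3, if_neg h1, if_neg h2, if_neg h3]; ring
    rw [show x ⬝ᵥ Q' *ᵥ x = ∑ i, x i * (Q' *ᵥ x) i from rfl,
      show x ⬝ᵥ Q *ᵥ x = ∑ i, x i * (Q *ᵥ x) i from rfl,
      Finset.sum_congr rfl fun i _ => hsplit i, Finset.sum_add_distrib,
      Finset.sum_add_distrib, Finset.sum_sub_distrib]
    simp only [mul_ite, mul_zero]
    rw [Finset.sum_ite_eq', Finset.sum_ite_eq', hsum_mem, ← Finset.sum_mul]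
    simp only [Finset.mem_univ, if_true]
    ring
  -- spectral comparison
  have hherm' : (signlessLaplacian G').IsHermitian := sl_isHermitian G'
  have hxx : 0 < x ⬝ᵥ x := by
    have : Nonempty V := hconn.nonempty
    exact Finset.sum_pos (fun i _ => mul_pos (hx_pos i) (hx_pos i)) Finset.univ_nonempty
  have hq1' : q1 G' = sSup (spectrum ℝ Q') := rfl
  have hxQx : x ⬝ᵥ Q *ᵥ x = q1 G * (x ⬝ᵥ x) := by
    rw [show Q *ᵥ x = Q.mulVec x from rfl, hx_eig, dotProduct_smul, smul_eq_mul]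
  have hray : x ⬝ᵥ Q' *ᵥ x ≤ q1 G' * (x ⬝ᵥ x) := by
    rw [hq1']; exact rayleigh_le_sSup hherm' x
  have hΔ : 0 ≤ (W.card : ℝ) * (x u ^ 2 - x v ^ 2) + 2 * T * (x u - x v) := by
    have h1 : (0:ℝ) ≤ (W.card : ℝ) := Nat.cast_nonneg _
    have h2 : (0:ℝ) ≤ x u - x v := sub_nonneg.mpr hxvu
    have h3 : (0:ℝ) ≤ x u + x v := by linarith [hx_pos u, hx_pos v]
    nlinarith [mul_nonneg h1 (mul_nonneg h2 h3), mul_nonneg hT.le h2]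
  by_contra hcon
  push_neg at hcon
  have hc2 : q1 G' * (x ⬝ᵥ x) ≤ q1 G * (x ⬝ᵥ x) := mul_le_mul_of_nonneg_right hcon hxx.le
  have heq : x ⬝ᵥ Q' *ᵥ x = q1 G' * (x ⬝ᵥ x) := by linarith
  have heig' : Q' *ᵥ x = q1 G' • x := by
    rw [hq1'] at heq ⊢
    exact mulVec_eq_of_rayleigh_eq hherm' x heq
  have hq1eq : q1 G' = q1 G := by
    have h3 : q1 G' * (x ⬝ᵥ x) = q1 G * (x ⬝ᵥ x) := by linarith
    exact mul_right_cancel₀ hxx.ne' h3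
  have h4 := congrFun heig' u
  rw [hrow_u] at h4
  have h5 : (Q *ᵥ x) u = q1 G * x u := by
    rw [show Q *ᵥ x = Q.mulVec x from rfl, hx_eig]; simp
  rw [h5, hq1eq] at h4
  simp only [Pi.smul_apply, smul_eq_mul] at h4
  have h6 : (1:ℝ) ≤ (W.card : ℝ) := by exact_mod_cast hW.card_pos
  nlinarith [hx_pos u, hT]
end
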